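/- Let w be a word containing two palindromic factors P1 = w[c1 - r1 .. c1 + r1] and P2 = w[c2 - r2 .. c2 + r2] with c1 < c2, such that each contains the other's centre and neither is a proper factor of the other. Then there exist palindromes s and t with |s| + |t| = 2(c2 - c1) such that the union w[c1 - r1 .. c2 + r2] is a factor of (st)^ω; i.e., the union is a palindromic periodicity with period 2(c2 - c1). -/

import Mathlib

/-!
The reflections of positions about the centres `c1` and `c2` compose to the translation by
`p = 2 (c2 - c1)`, so the union of the two palindromes is `p`-periodic. A period window may then
start at the centre of `P1`: take for `s` the central letter of `P1` (empty if `|P1|` is even) and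
for `t` the following `p - |s|` letters; `t` is centred at `c2` and, because `P1` contains the
centre of `P2`, lies inside `P2`, so it is a palindrome.
-/

/-- `w` (of length `n`) is a palindromic periodicity with period `p`: there are
palindromes `s` (length `sl`) and `t` (length `p - sl`), encoded as the word
`u = st` of length `p`, such that `w` is a factor of `(st)^ω` and `|w| ≥ p`. -/
def PalPer {α : Type*} (w : ℕ → α) (n p : ℕ) : Prop :=
  0 < p ∧ p ≤ n ∧
    ∃ (sl : ℕ) (u : ℕ → α) (k : ℕ), sl ≤ p ∧
      (∀ i j, i + j + 1 = sl → u i = u j) ∧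
      (∀ i j, sl ≤ i → sl ≤ j → i + j + 1 = sl + p → u i = u j) ∧
      (∀ i < n, w i = u ((k + i) % p))

section

variable {α : Type*}

def IsPalOn (w : ℕ → α) (a b : ℕ) : Prop :=
  ∀ i j, a ≤ i → a ≤ j → i + j = a + b → w i = w j

def PeriodicOn (w : ℕ → α) (a b p : ℕ) : Prop :=
  ∀ x, a ≤ x → x + p ≤ b → w x = w (x + p)

theorem IsPalOn.periodicOn {w : ℕ → α} {a1 b1 a2 b2 : ℕ} (h1 : IsPalOn w a1 b1)
    (h2 : IsPalOn w a2 b2) (ha : a1 ≤ a2) (hb : b1 ≤ b2) :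
    PeriodicOn w a1 b2 (a2 + b2 - (a1 + b1)) := by
  intro x hx hxb
  calc w x = w (a1 + b1 - x) := h1 _ _ hx (by omega) (by omega)
    _ = w (x + (a2 + b2 - (a1 + b1))) := h2 _ _ (by omega) (by omega) (by omega)

namespace PeriodicOn

variable {w : ℕ → α} {a b p : ℕ}

theorem eq_add_mul (h : PeriodicOn w a b p) :
    ∀ m x, a ≤ x → x + m * p ≤ b → w x = w (x + m * p) := by
  intro m
  induction m with
  | zero => simp
  | succ m ih =>
    intro x hx hxb
    rw [Nat.succ_mul, ← add_assoc] at hxb ⊢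
    exact (ih x hx (by omega)).trans (h _ (by omega) hxb)

theorem eq_of_modEq (h : PeriodicOn w a b p) {x y : ℕ} (hx : a ≤ x) (hxb : x ≤ b) (hy : a ≤ y)
    (hyb : y ≤ b) (hxy : x ≡ y [MOD p]) : w x = w y := by
  wlog hle : x ≤ y generalizing x y
  · exact (this hy hyb hx hxb hxy.symm (by omega)).symm
  obtain ⟨m, hm⟩ := (Nat.modEq_iff_dvd' hle).mp hxy
  have hy_eq : y = x + m * p := by rw [mul_comm, ← hm]; omega
  subst hy_eq
  exact h.eq_add_mul m x hx hyb

end PeriodicOn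

theorem palPer_of_window {w : ℕ → α} {n p q sl : ℕ} (hp : 0 < p) (hq : q + p ≤ n)
    (hsl : sl ≤ p) (hper : ∀ x y, x < n → y < n → x ≡ y [MOD p] → w x = w y)
    (hs : ∀ i j, i + j + 1 = sl → w (q + i) = w (q + j))
    (ht : ∀ i j, sl ≤ i → sl ≤ j → i + j + 1 = sl + p → w (q + i) = w (q + j)) :
    PalPer w n p := by
  refine ⟨hp, by omega, sl, fun i => w (q + i), p - q % p, hsl, hs, ht, fun i hi => ?_⟩
  have hqp : q % p < p := Nat.mod_lt q hp
  have hrp : (p - q % p + i) % p < p := Nat.mod_lt _ hp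
  refine hper _ _ hi (by omega) ?_
  -- `q + (p - q % p)` is a multiple of `p`
  calc i ≡ i + (q / p + 1) * p [MOD p] := (Nat.add_mul_mod_self_right _ _ _).symm
    _ = q + (p - q % p + i) := by have := Nat.div_add_mod q p; rw [add_mul]; lia
    _ ≡ q + (p - q % p + i) % p [MOD p] := (Nat.mod_modEq _ p).symm.add_left q

end

theorem stmt_10_general {α : Type*} (w : ℕ → α) (a1 b1 a2 b2 : ℕ)
    (hpal1 : ∀ i j, a1 ≤ i → a1 ≤ j → i + j = a1 + b1 → w i = w j)
    (hpal2 : ∀ i j, a2 ≤ i → a2 ≤ j → i + j = a2 + b2 → w i = w j)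
    (hcc : a1 + b1 < a2 + b2)
    (hc1 : 2 * a2 ≤ a1 + b1)
    (hf1 : a1 ≤ a2) (hf2 : b1 ≤ b2) :
    PalPer (fun i => w (a1 + i)) (b2 - a1 + 1) ((a2 + b2) - (a1 + b1)) := by
  have hper : PeriodicOn w a1 b2 (a2 + b2 - (a1 + b1)) :=
    IsPalOn.periodicOn hpal1 hpal2 hf1 hf2
  refine palPer_of_window (q := (a1 + b1 + 1) / 2 - a1) (sl := (a1 + b1 + 1) % 2)
    (by omega) (by omega) (by omega) ?_ ?_ ?_
  · intro x y hx hy hxy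
    exact hper.eq_of_modEq (by omega) (by omega) (by omega) (by omega) (hxy.add_left a1)
  · intro i j hij
    exact hpal1 _ _ (by omega) (by omega) (by omega)
  · intro i j hi hj hij
    exact hpal2 _ _ (by omega) (by omega) (by omega)

/-- Two palindromic factors `w[a1..b1]`, `w[a2..b2]` with doubled centres
`a1+b1 < a2+b2`, each containing the other's centre (`2a2 ≤ a1+b1` and
`a2+b2 ≤ 2b1`), neither a proper factor of the other (`a1 ≤ a2`, `b1 ≤ b2`):
then the union `w[a1..b2]` is a palindromic periodicity with period
`2(c2 - c1) = (a2+b2) - (a1+b1)`. -/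
theorem stmt_10 {α : Type*} (w : ℕ → α) (a1 b1 a2 b2 : ℕ)
    (hpal1 : ∀ i j, a1 ≤ i → a1 ≤ j → i + j = a1 + b1 → w i = w j)
    (hpal2 : ∀ i j, a2 ≤ i → a2 ≤ j → i + j = a2 + b2 → w i = w j)
    (hcc : a1 + b1 < a2 + b2)
    (hc1 : 2 * a2 ≤ a1 + b1) (hc2 : a2 + b2 ≤ 2 * b1)
    (hf1 : a1 ≤ a2) (hf2 : b1 ≤ b2) :
    PalPer (fun i => w (a1 + i)) (b2 - a1 + 1) ((a2 + b2) - (a1 + b1)) :=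
  stmt_10_general w a1 b1 a2 b2 hpal1 hpal2 hcc hc1 hf1 hf2
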